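/- Let G₁ and G₂ be disjoint graphs, v₁ ∈ V(G₁), v₂ ∈ V(G₂), and let G be the graph obtained from their disjoint union by adding the single edge {v₁, v₂}. Then det(A(G)) = det(A(G₁))·det(A(G₂)) - det(A(G₁ \ v₁))·det(A(G₂ \ v₂)). In particular, G is singular if and only if det(G₁)det(G₂) = det(G₁ \ v₁)det(G₂ \ v₂). -/

import Mathlib

/-!
Expand `det A(G)` by multilinearity in column `v₂` and then in column `v₁`, splitting off the
bridge entries `A v₁ v₂` and `A v₂ v₁` as multiples of unit columns. The term without bridge
entries is block triangular and gives `det G₁ · det G₂`. The term carrying only `A v₁ v₂`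
vanishes: it is block triangular and its `G₂`-block has a zero column. The term carrying both
becomes, after swapping the columns `v₁` and `v₂`, block triangular with unit columns at `v₁`
and `v₂`, which contributes `-det (G₁ \ v₁) · det (G₂ \ v₂)`.
-/

open scoped Classical

/-- Determinant of the adjacency matrix of the subgraph of `G` induced on `s`. -/
noncomputable def inducedDet {V : Type} [Fintype V] (G : SimpleGraph V) (s : Finset V) : ℝ :=
  Matrix.det (Matrix.of fun i j : {x // x ∈ s} => if G.Adj i j then (1 : ℝ) else 0)

namespace Matrix

variable {ι R : Type*} [Fintype ι] [DecidableEq ι] [CommRing R]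

theorem det_eq_det_updateCol_add_mul (M : Matrix ι ι R) (i j : ι) :
    M.det = (M.updateCol j (Function.update (fun k => M k j) i 0)).det +
      M i j * (M.updateCol j (Pi.single i 1)).det := by
  have hcol : (fun k => M k j) = Function.update (fun k => M k j) i 0 + M i j • Pi.single i 1 := by
    ext k
    by_cases hk : k = i <;> simp [hk]
  conv_lhs => rw [← M.updateCol_eq_self j, hcol]
  rw [det_updateCol_add, det_updateCol_smul]

theorem det_toSquareBlockProp_eq_mul_det_toSquareBlockProp_ne (M : Matrix ι ι R)
    {p : ι → Prop} [DecidablePred p] {v : ι} (hv : p v) (h : ∀ i, p i → i ≠ v → M i v = 0) :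
    (M.toSquareBlockProp p).det = M v v * (M.toSquareBlockProp fun i => p i ∧ i ≠ v).det := by
  set N := M.toSquareBlockProp p
  have : Subsingleton {a : {i // p i} // a.1 = v} :=
    ⟨fun a b => Subtype.ext (Subtype.ext (a.2.trans b.2.symm))⟩
  rw [N.twoBlockTriangular_det (·.1 = v) fun i hi j hj =>
      (congrArg (M i) hj).trans (h i i.2 hi),
    det_eq_elem_of_subsingleton _ ⟨⟨v, hv⟩, rfl⟩,
    ← det_submatrix_equiv_self (Equiv.subtypeSubtypeEquivSubtypeInter p (· ≠ v))]
  rfl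

theorem toSquareBlockProp_updateCol {m α : Type*} [DecidableEq m] (M : Matrix m m α)
    {p : m → Prop} {j : m} {c : m → α} (h : p j → ∀ i, p i → c i = M i j) :
    (M.updateCol j c).toSquareBlockProp p = M.toSquareBlockProp p := by
  ext i k
  by_cases hk : k.1 = j
  · simp [toSquareBlockProp_def, updateCol_apply, hk, h (hk ▸ k.2) i i.2]
  · simp [toSquareBlockProp_def, updateCol_apply, hk]

theorem det_toSquareBlockProp_updateCol_single (M : Matrix ι ι R) {p : ι → Prop}
    [DecidablePred p] {v : ι} (hv : p v) :
    ((M.updateCol v (Pi.single v 1)).toSquareBlockProp p).det =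
      (M.toSquareBlockProp fun i => p i ∧ i ≠ v).det := by
  rw [det_toSquareBlockProp_eq_mul_det_toSquareBlockProp_ne _ hv
      fun i _ hi => by simp [hi],
    toSquareBlockProp_updateCol _ fun h => absurd rfl h.2]
  simp

section Bridge

variable {M : Matrix ι ι R} {p : ι → Prop} [DecidablePred p] {v₁ v₂ : ι}

theorem det_updateCol_update_of_bridge (hv₁ : p v₁) (hv₂ : ¬p v₂)
    (h₁₂ : ∀ i j, p i → ¬p j → M i j ≠ 0 → i = v₁ ∧ j = v₂) :
    (M.updateCol v₂ (Function.update (fun k => M k v₂) v₁ 0)).det =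
      (M.toSquareBlockProp p).det * (M.toSquareBlockProp fun i => ¬p i).det := by
  rw [twoBlockTriangular_det' _ p, toSquareBlockProp_updateCol _ (absurd · hv₂),
    toSquareBlockProp_updateCol _ fun _ i hi => Function.update_of_ne
      (by rintro rfl; exact hi hv₁) _ _]
  intro i hi j hj
  rw [updateCol_apply]
  split_ifs with hj₂
  · subst hj₂
    rw [Function.update_apply]
    split_ifs with hi₁
    · rfl
    · by_contra hne
      exact hi₁ (h₁₂ i _ hi hj hne).1
  · by_contra hne
    exact hj₂ (h₁₂ i j hi hj hne).2

theorem det_updateCol_single_updateCol_update_of_bridge_eq_zero (hv₁ : p v₁) (hv₂ : ¬p v₂)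
    (h₂₁ : ∀ i j, ¬p i → p j → M i j ≠ 0 → i = v₂ ∧ j = v₁) :
    ((M.updateCol v₂ (Pi.single v₁ 1)).updateCol v₁
      (Function.update (fun k => M.updateCol v₂ (Pi.single v₁ 1) k v₁) v₂ 0)).det = 0 := by
  have hne : v₁ ≠ v₂ := by rintro rfl; exact hv₂ hv₁
  rw [twoBlockTriangular_det _ p, det_eq_zero_of_column_eq_zero (⟨v₂, hv₂⟩ : {i // ¬p i}), mul_zero]
  · intro i
    simp only [toSquareBlockProp_def, of_apply, updateCol_apply, hne.symm, ↓reduceIte,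
      Pi.single_apply, ite_eq_right_iff]
    rintro rfl
    exact absurd hv₁ i.2
  · intro i hi j hj
    simp only [updateCol_apply, Function.update_apply, if_neg hne]
    split_ifs with hj₁ hi₂ hj₂
    · rfl
    · subst hj₁
      by_contra h
      exact hi₂ (h₂₁ i _ hi hj h).1
    · exact absurd (hj₂ ▸ hj) hv₂
    · by_contra h
      exact hj₁ (h₂₁ i j hi hj h).2

theorem det_updateCol_single_updateCol_single_of_bridge (hv₁ : p v₁) (hv₂ : ¬p v₂)
    (h₁₂ : ∀ i j, p i → ¬p j → M i j ≠ 0 → i = v₁ ∧ j = v₂) :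
    ((M.updateCol v₂ (Pi.single v₁ 1)).updateCol v₁ (Pi.single v₂ 1)).det =
      -((M.toSquareBlockProp fun i => p i ∧ i ≠ v₁).det *
        (M.toSquareBlockProp fun i => ¬p i ∧ i ≠ v₂).det) := by
  have hne : v₁ ≠ v₂ := by rintro rfl; exact hv₂ hv₁
  set S := (M.updateCol v₁ (Pi.single v₁ 1)).updateCol v₂ (Pi.single v₂ 1)
  have hswap : ((M.updateCol v₂ (Pi.single v₁ 1)).updateCol v₁ (Pi.single v₂ 1)).submatrix id
      (Equiv.swap v₁ v₂) = S := by
    ext i j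
    simp only [S, submatrix_apply, id, updateCol_apply, Equiv.swap_apply_def]
    split_ifs <;> simp_all
  have hS : S.det = (M.toSquareBlockProp fun i => p i ∧ i ≠ v₁).det *
      (M.toSquareBlockProp fun i => ¬p i ∧ i ≠ v₂).det := by
    rw [twoBlockTriangular_det' S p, toSquareBlockProp_updateCol _ (absurd · hv₂),
      det_toSquareBlockProp_updateCol_single _ hv₁,
      det_toSquareBlockProp_updateCol_single (p := fun i => ¬p i) _ hv₂,
      toSquareBlockProp_updateCol _ fun h => absurd hv₁ h.1]
    intro i hi j hj
    simp only [S, updateCol_apply]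
    split_ifs with hj₂ hj₁
    · exact Pi.single_eq_of_ne (by rintro rfl; exact hv₂ hi) _
    · exact absurd (hj₁ ▸ hv₁) hj
    · by_contra h
      exact hj₂ (h₁₂ i j hi hj h).2
  rw [← hS, ← hswap, det_permute', Equiv.Perm.sign_swap hne]
  simp

theorem det_eq_sub_of_bridge (hv₁ : p v₁) (hv₂ : ¬p v₂)
    (h₁₂ : ∀ i j, p i → ¬p j → M i j ≠ 0 → i = v₁ ∧ j = v₂)
    (h₂₁ : ∀ i j, ¬p i → p j → M i j ≠ 0 → i = v₂ ∧ j = v₁) :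
    M.det = (M.toSquareBlockProp p).det * (M.toSquareBlockProp fun i => ¬p i).det -
      M v₁ v₂ * M v₂ v₁ * (M.toSquareBlockProp fun i => p i ∧ i ≠ v₁).det *
        (M.toSquareBlockProp fun i => ¬p i ∧ i ≠ v₂).det := by
  have hne : v₁ ≠ v₂ := by rintro rfl; exact hv₂ hv₁
  rw [M.det_eq_det_updateCol_add_mul v₁ v₂,
    (M.updateCol v₂ (Pi.single v₁ 1)).det_eq_det_updateCol_add_mul v₂ v₁,
    det_updateCol_update_of_bridge hv₁ hv₂ h₁₂,
    det_updateCol_single_updateCol_update_of_bridge_eq_zero hv₁ hv₂ h₂₁,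
    det_updateCol_single_updateCol_single_of_bridge hv₁ hv₂ h₁₂, updateCol_ne hne]
  ring

end Bridge

end Matrix

namespace SimpleGraph

theorem det_adjMatrix_of_bridge {V R : Type*} [Fintype V] [DecidableEq V] [CommRing R]
    (G : SimpleGraph V) [DecidableRel G.Adj] {p : V → Prop} [DecidablePred p] {v₁ v₂ : V}
    (hv₁ : p v₁) (hv₂ : ¬p v₂) (hbridge : G.Adj v₁ v₂)
    (hsep : ∀ a b, p a → ¬p b → G.Adj a b → a = v₁ ∧ b = v₂) :
    (G.adjMatrix R).det =
      ((G.adjMatrix R).toSquareBlockProp p).det *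
          ((G.adjMatrix R).toSquareBlockProp fun i => ¬p i).det -
        ((G.adjMatrix R).toSquareBlockProp fun i => p i ∧ i ≠ v₁).det *
          ((G.adjMatrix R).toSquareBlockProp fun i => ¬p i ∧ i ≠ v₂).det := by
  have hadj : ∀ {a b}, G.adjMatrix R a b ≠ 0 → G.Adj a b := fun h => by
    by_contra hab
    exact h (by simp [hab])
  simpa [hbridge, hbridge.symm] using (G.adjMatrix R).det_eq_sub_of_bridge hv₁ hv₂
    (fun a b ha hb h => hsep a b ha hb (hadj h))
    (fun a b ha hb h => (hsep b a hb ha (hadj h).symm).symm)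

end SimpleGraph

theorem det_toSquareBlockProp_adjMatrix_eq_inducedDet {V : Type} [Fintype V] [DecidableEq V]
    (G : SimpleGraph V) (s : Finset V) {p : V → Prop} [DecidablePred p] (h : ∀ x, p x ↔ x ∈ s) :
    ((G.adjMatrix ℝ).toSquareBlockProp p).det = inducedDet G s := by
  -- `inducedDet` uses `Finset.Subtype.fintype` and classical equality on `s`.
  have det_fintype_irrel : ∀ (d₁ d₂ : DecidableEq s) (i₁ i₂ : Fintype s) (N : Matrix s s ℝ),
      @Matrix.det _ d₁ i₁ _ _ N = @Matrix.det _ d₂ i₂ _ _ N :=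
    fun d₁ d₂ i₁ i₂ N => by rw [Subsingleton.elim d₁ d₂, Subsingleton.elim i₁ i₂]
  rw [← (G.adjMatrix ℝ).equiv_block_det h]
  exact det_fintype_irrel _ _ _ _ _

theorem inducedDet_univ {V : Type} [Fintype V] [DecidableEq V] (G : SimpleGraph V) :
    inducedDet G Finset.univ = (G.adjMatrix ℝ).det := by
  rw [← det_toSquareBlockProp_adjMatrix_eq_inducedDet G _ (p := fun _ => True) (by simp)]
  exact (G.adjMatrix ℝ).det_submatrix_equiv_self (Equiv.subtypeUnivEquiv fun _ => trivial)

/-- If `G` is obtained from the disjoint graphs induced on `A` and `B` by adding the single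
bridge `{v₁, v₂}`, then
`det G = det G₁ · det G₂ − det (G₁ \ v₁) · det (G₂ \ v₂)`;
in particular `G` is singular iff `det G₁ · det G₂ = det (G₁ \ v₁) · det (G₂ \ v₂)`. -/
theorem stmt_14 {V : Type} [Fintype V] [DecidableEq V] (G : SimpleGraph V)
    (v₁ v₂ : V) (A B : Finset V)
    (hU : A ∪ B = Finset.univ) (hI : A ∩ B = ∅)
    (hv₁ : v₁ ∈ A) (hv₂ : v₂ ∈ B)
    (hbridge : G.Adj v₁ v₂)
    (hsep : ∀ a ∈ A, ∀ b ∈ B, G.Adj a b → a = v₁ ∧ b = v₂) :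
    inducedDet G Finset.univ =
        inducedDet G A * inducedDet G B -
          inducedDet G (A.erase v₁) * inducedDet G (B.erase v₂) ∧
      (inducedDet G Finset.univ = 0 ↔
        inducedDet G A * inducedDet G B =
          inducedDet G (A.erase v₁) * inducedDet G (B.erase v₂)) := by
  obtain rfl : Aᶜ = B := (IsCompl.of_eq hI hU).compl_eq
  rw [Finset.mem_compl] at hv₂
  have hdet : inducedDet G Finset.univ = inducedDet G A * inducedDet G Aᶜ -
      inducedDet G (A.erase v₁) * inducedDet G (Aᶜ.erase v₂) := by
    rw [inducedDet_univ, G.det_adjMatrix_of_bridge (p := (· ∈ A)) hv₁ hv₂ hbridge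
        fun a b ha hb => hsep a ha b (Finset.mem_compl.2 hb),
      det_toSquareBlockProp_adjMatrix_eq_inducedDet G A fun _ => Iff.rfl,
      det_toSquareBlockProp_adjMatrix_eq_inducedDet G Aᶜ fun _ => Finset.mem_compl.symm,
      det_toSquareBlockProp_adjMatrix_eq_inducedDet G (A.erase v₁) fun _ => by simp [and_comm],
      det_toSquareBlockProp_adjMatrix_eq_inducedDet G (Aᶜ.erase v₂) fun _ => by simp [and_comm]]
  exact ⟨hdet, hdet ▸ sub_eq_zero⟩
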